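/- arXiv:2409.07176 — 2 statements merged into one kernel-verified Lean document; each statement's English description precedes it below -/
import Mathlib

section
/- Let D be a diagonal matrix with diagonal entries q_i = d_i/(Y − Σ_j d_j + d_i), where d_i > 0 and Y > Σ_j d_j ≥ 0, and let M = J − I be the hollow all-ones matrix. Then I + D·M is invertible. -/
open scoped BigOperators

/-- let `D = diag(q)` with `q_i = d_i/(Y − Σ_j d_j + d_i)`, where
`d_i > 0` and `Y > Σ_j d_j`, and let `M = J − I` be the hollow all-ones matrix.
Then `I + D·M` is invertible. -/
theorem canonical_multinomial_matrix_invertible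
    (n : ℕ) (hn : 1 ≤ n) (d : Fin n → ℝ) (hd : ∀ i, 0 < d i)
    (Y : ℝ) (hY : (∑ j, d j) < Y)
    (q : Fin n → ℝ) (hq : ∀ i, q i = d i / (Y - (∑ j, d j) + d i))
    (D M J : Matrix (Fin n) (Fin n) ℝ)
    (hD : D = Matrix.diagonal q)
    (hJ : ∀ i j, J i j = 1)
    (hM : M = J - 1) :
    IsUnit (1 + D * M) := by
  have hT : (0:ℝ) < Y - ∑ j, d j := sub_pos.2 hY
  have hsum : (0:ℝ) < ∑ j, d j := by
    apply Finset.sum_pos (fun i _ => hd i)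
    exact ⟨⟨0, hn⟩, Finset.mem_univ _⟩
  have hYpos : (0:ℝ) < Y := hsum.trans hY
  rw [Matrix.isUnit_iff_isUnit_det, isUnit_iff_ne_zero]
  intro hdet
  obtain ⟨v, hv, hmv⟩ := (Matrix.exists_mulVec_eq_zero_iff).2 hdet
  have key : ∀ i, v i * (Y - ∑ j, d j) = - d i * (∑ j, v j) := by
    intro i
    have h := congrFun hmv i
    have hrow : v i + q i * ((∑ j, v j) - v i) = 0 := by
      have : ((1 + D * M).mulVec v) i
          = v i + q i * ((∑ j, v j) - v i) := by
        rw [Matrix.add_mulVec, Matrix.one_mulVec, hD, hM, ← Matrix.mulVec_mulVec,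
          Matrix.sub_mulVec, Matrix.one_mulVec]
        simp only [Pi.add_apply, Pi.sub_apply, Matrix.diagonal_mulVec_single]
        have hJv : (J.mulVec v) i = ∑ j, v j := by
          simp [Matrix.mulVec, dotProduct, hJ]
        rw [Matrix.mulVec_diagonal]
        simp [hJv]
      rw [h] at this
      simpa using this.symm
    have hden : (0:ℝ) < Y - (∑ j, d j) + d i := by linarith [hd i]
    rw [hq i] at hrow
    field_simp at hrow
    nlinarith [hrow]
  have hS : (∑ j, v j) = 0 := by
    have hsumkey : (∑ i, v i * (Y - ∑ j, d j)) = ∑ i, - d i * (∑ j, v j) := by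
      exact Finset.sum_congr rfl (fun i _ => key i)
    rw [← Finset.sum_mul, ← Finset.sum_mul] at hsumkey
    have : (∑ i, v i) * Y = 0 := by
      have h2 : (∑ i, - d i) = - ∑ i, d i := by simp
      rw [h2] at hsumkey
      nlinarith [hsumkey]
    exact (mul_eq_zero.1 this).resolve_right (ne_of_gt hYpos)
  apply hv
  funext i
  have := key i
  rw [hS] at this
  simp only [mul_zero] at this
  have := mul_eq_zero.1 this
  rcases this with h | h
  · exact h
  · linarith
end

section
/- If the reduced gradient ∇_{gh}^k = Y_g^k − d_{gh}^k/α̃_{gh}^k + μ_g^k equals 0 for all (g,h,k), then α̃ is a fixed point of the EM update rule: applying the M-step formula to the expectations computed at α̃ returns α̃ itself. -/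
/-! At a zero of the reduced gradient, `d_{gh}^k = α̃_{gh}^k (Y_g^k + μ_g^k)`. Both branches of the
M-step divide `d_{gh}^k` by `Y_g^k + μ_g^k`: when `μ_g^k > 0` the multiplier is exactly the excess
`Σ_h d_{gh}^k − Y_g^k`, so `Y_g^k + μ_g^k = Σ_h d_{gh}^k`. -/

theorem ite_eq_add_of_eq_max_zero_sub {α : Type*} [AddCommGroup α] [LinearOrder α]
    [IsOrderedAddMonoid α] {μ Y S : α} (hμ : μ = max 0 (S - Y)) :
    (if μ = 0 then Y else S) = Y + μ := by
  split_ifs with hμ0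
  · rw [hμ0, add_zero]
  · have hpos : 0 < S - Y := by
      by_contra! hle
      exact hμ0 (hμ.trans (max_eq_left hle))
    rw [hμ, max_eq_right hpos.le, add_sub_cancel]

theorem div_eq_of_div_eq {K : Type*} [Field K] {d a c : K} (ha : a ≠ 0) (hc : c ≠ 0)
    (h : d / a = c) : d / c = a :=
  div_eq_of_eq_mul hc (by rw [← h, mul_div_cancel₀ d ha])

theorem reduced_gradient_zero_implies_fixed_point_general
    {G H K : Type*}
    (reach : G → Finset H)
    (αt d : G → H → K → ℝ) (Y : G → K → ℝ)
    (hαt : ∀ g k, ∀ h ∈ reach g, 0 < αt g h k ∧ αt g h k ≤ 1)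
    (hY : ∀ g k, 0 < Y g k)
    (μ : G → K → ℝ)
    (hμ : ∀ g k, μ g k = max 0 ((∑ h ∈ reach g, d g h k) - Y g k))
    (α : G → H → K → ℝ)
    (hα : ∀ g k, ∀ h ∈ reach g, α g h k =
      if μ g k = 0 then d g h k / Y g k
      else d g h k / ∑ h' ∈ reach g, d g h' k)
    (hgrad : ∀ g k, ∀ h ∈ reach g, Y g k - d g h k / αt g h k + μ g k = 0) :
    ∀ g k, ∀ h ∈ reach g, α g h k = αt g h k := by
  intro g k h hh
  have hstationary : d g h k / αt g h k = Y g k + μ g k := by linarith [hgrad g k h hh]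
  have hdenom : 0 < Y g k + μ g k :=
    add_pos_of_pos_of_nonneg (hY g k) ((hμ g k).symm ▸ le_max_left _ _)
  rw [hα g k h hh, ← div_ite, ite_eq_add_of_eq_max_zero_sub (hμ g k)]
  exact div_eq_of_div_eq (hαt g k h hh).1.ne' hdenom.ne' hstationary

/-- if the reduced gradient
`∇_{gh}^k = Y_g^k − d_{gh}^k/α̃_{gh}^k + μ_g^k` vanishes for all `(g,h,k)` (with
`h` ranging over the states reachable from `g`), then `α̃` is a fixed point of
the EM update rule: applying the M-step formula to the expectations computed at
`α̃` returns `α̃` itself. -/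
theorem reduced_gradient_zero_implies_fixed_point
    {G H K : Type*} [Fintype G] [Fintype H] [Fintype K]
    (reach : G → Finset H)
    (αt d : G → H → K → ℝ) (Y : G → K → ℝ)
    (hαt : ∀ g k, ∀ h ∈ reach g, 0 < αt g h k ∧ αt g h k ≤ 1)
    (hd : ∀ g k, ∀ h ∈ reach g, 0 < d g h k)
    (hY : ∀ g k, 0 < Y g k)
    (μ : G → K → ℝ)
    (hμ : ∀ g k, μ g k = max 0 ((∑ h ∈ reach g, d g h k) - Y g k))
    (α : G → H → K → ℝ)
    (hα : ∀ g k, ∀ h ∈ reach g, α g h k =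
      if μ g k = 0 then d g h k / Y g k
      else d g h k / ∑ h' ∈ reach g, d g h' k)
    (hgrad : ∀ g k, ∀ h ∈ reach g, Y g k - d g h k / αt g h k + μ g k = 0) :
    ∀ g k, ∀ h ∈ reach g, α g h k = αt g h k :=
  reduced_gradient_zero_implies_fixed_point_general reach αt d Y hαt hY μ hμ α hα hgrad
end
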